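/- arXiv:1502.06273 — 4 statements merged into one kernel-verified Lean document; each statement's English description precedes it below -/
import Mathlib

section
/- Given λ > 1, a finite set A = {r_1,…,r_N} ⊂ E of at most N points, and ε > 0, there exist a subset A′ ⊆ A and a real number R(ε) > 0 such that: (i) ε ≤ R(ε) < (2λ)^N ε; (ii) any two distinct points of A′ are at distance at least 2λ R(ε) from each other; and (iii) A is contained in the union of the closed balls of radius R(ε) centered at the points of A′ (i.e. A′ defines a λ-cluster partition of size R(ε) of A). -/
open MeasureTheory Set
open scoped ENNReal

noncomputable section NBody

variable {E : Type*} [NormedAddCommGroup E] [InnerProductSpace ℝ E] [FiniteDimensional ℝ E]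

/-- The homogeneous potential `U_κ` of degree `-2κ`, with value `∞` at collisions. -/
def pot {N : ℕ} (κ : ℝ) (m : Fin N → ℝ) (x : Fin N → E) : ℝ≥0∞ :=
  ∑ p ∈ Finset.univ.filter (fun p : Fin N × Fin N => p.1 < p.2),
    ENNReal.ofReal (m p.1 * m p.2) * ENNReal.ofReal ‖x p.1 - x p.2‖ ^ (-(2 * κ))

/-- `γ` is absolutely continuous on `[a,b]`, with a.e. derivative `γ'`
(integrable and satisfying the fundamental theorem of calculus). -/
def ACPair {N : ℕ} (γ γ' : ℝ → Fin N → E) (a b : ℝ) : Prop :=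
  IntervalIntegrable γ' volume a b ∧
    ∀ t ∈ Icc a b, γ t = γ a + ∫ s in a..t, γ' s

/-- Lagrangian action of an absolutely continuous curve on `[a,b]`:
kinetic part (w.r.t. the mass scalar product) plus potential part. -/
def action {N : ℕ} (κ : ℝ) (m : Fin N → ℝ) (γ γ' : ℝ → Fin N → E) (a b : ℝ) : ℝ≥0∞ :=
  ∫⁻ t in Ioc a b,
    (ENNReal.ofReal ((1 / 2) * ∑ i, m i * ‖γ' t i‖ ^ 2) + pot κ m (γ t))

/-- `φ(x,y,T)`: minimal action among absolutely continuous curves binding `x` to `y`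
in time `T`. -/
def phiT {N : ℕ} (κ : ℝ) (m : Fin N → ℝ) (x y : Fin N → E) (T : ℝ) : ℝ≥0∞ :=
  ⨅ (γ : ℝ → Fin N → E) (γ' : ℝ → Fin N → E)
    (_ : ACPair γ γ' 0 T ∧ γ 0 = x ∧ γ T = y), action κ m γ γ' 0 T

/-- The critical (Mañé) action potential `φ(x,y) = inf_{T>0} φ(x,y,T)`. -/
def phi {N : ℕ} (κ : ℝ) (m : Fin N → ℝ) (x y : Fin N → E) : ℝ≥0∞ :=
  ⨅ (T : ℝ) (_ : 0 < T), phiT κ m x y T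

/-- A function is dominated if `u(x) - u(y) ≤ φ(x,y)` for all `x, y`. -/
def Dominated {N : ℕ} (κ : ℝ) (m : Fin N → ℝ) (u : (Fin N → E) → ℝ) : Prop :=
  ∀ x y, ENNReal.ofReal (u x - u y) ≤ phi κ m x y

/-- The Lax–Oleinik semigroup `T_t⁻ u (x) = inf_y (u(y) + φ(x,y,t))`, with `T_0⁻ u = u`. -/
def lax {N : ℕ} (κ : ℝ) (m : Fin N → ℝ) (u : (Fin N → E) → ℝ) (t : ℝ)
    (x : Fin N → E) : EReal :=
  if t = 0 then (u x : EReal)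
  else ⨅ y : Fin N → E, ((u y : EReal) + ((phiT κ m x y t : ℝ≥0∞) : EReal))

/-- Squared dual norm (w.r.t. the mass scalar product) of a linear form on `E^N`:
`|p|² = ∑ᵢ mᵢ⁻¹ ‖pᵢ‖²`. -/
def dualNormSq {N : ℕ} (m : Fin N → ℝ) (p : (Fin N → E) →L[ℝ] ℝ) : ℝ :=
  ∑ i, (m i)⁻¹ * ‖p.comp (LinearMap.single ℝ (fun _ : Fin N => E) i).toContinuousLinearMap‖ ^ 2

end NBody

/-- Pigeonhole for antitone `ℕ`-valued sequences. -/
lemma antitone_pigeon (f : ℕ → ℕ) (M : ℕ) (hf : ∀ k, f (k + 1) ≤ f k)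
    (h0 : f 0 ≤ M) (h1 : 1 ≤ f M) : ∃ k < M, f k = f (k + 1) := by
  by_contra h
  push_neg at h
  have key : ∀ k, k ≤ M → f k + k ≤ f 0 := by
    intro k hk
    induction k with
    | zero => simp
    | succ n ih =>
      have hn : n < M := by omega
      have hne := h n hn
      have := hf n
      have : f (n + 1) < f n := lt_of_le_of_ne this hne.symm
      have := ih (by omega)
      omega
  have := key M le_rfl
  omega

/-- Cluster partition lemma: given `λ > 1`, a finite set `A ⊂ E` of at most `N` points and
`ε > 0`, there are `A' ⊆ A` and `R ∈ [ε, (2λ)^N ε)` such that the points of `A'` are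
pairwise at distance `≥ 2λR` and `A` is covered by the balls of radius `R` centered at `A'`. -/
theorem cluster_partition
    {E : Type*} [NormedAddCommGroup E] [InnerProductSpace ℝ E] [FiniteDimensional ℝ E]
    (N : ℕ) (hN : 1 ≤ N) (lam : ℝ) (hlam : 1 < lam)
    (A : Finset E) (hA : A.card ≤ N) (ε : ℝ) (hε : 0 < ε) :
    ∃ A' : Finset E, A' ⊆ A ∧ ∃ R : ℝ,
      (ε ≤ R ∧ R < (2 * lam) ^ N * ε) ∧
      (∀ s ∈ A', ∀ s' ∈ A', s ≠ s' → 2 * lam * R ≤ ‖s - s'‖) ∧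
      (∀ a ∈ A, ∃ s ∈ A', ‖a - s‖ ≤ R) := by
  classical
  have h2 : (1:ℝ) < 2 * lam := by linarith
  by_cases hsep : ∀ s ∈ A, ∀ s' ∈ A, s ≠ s' → 2 * lam * ε ≤ ‖s - s'‖
  · refine ⟨A, Finset.Subset.refl A, ε, ⟨le_refl ε, ?_⟩, hsep,
      fun a ha => ⟨a, ha, by simp [hε.le]⟩⟩
    have h1 : (1:ℝ) < (2 * lam) ^ N := one_lt_pow₀ h2 (by omega)
    nlinarith
  · -- `A` is nonempty and not `2λε`-separated.
    push_neg at hsep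
    obtain ⟨a₀, ha₀, b₀, hb₀, hab₀, hd₀⟩ := hsep
    -- family of `r`-separated subsets of `A`
    set F : ℝ → Finset (Finset E) :=
      fun r => A.powerset.filter (fun S => ∀ s ∈ S, ∀ s' ∈ S, s ≠ s' → r ≤ ‖s - s'‖) with hF
    have hmemF : ∀ r S, S ∈ F r ↔ S ⊆ A ∧ ∀ s ∈ S, ∀ s' ∈ S, s ≠ s' → r ≤ ‖s - s'‖ := by
      intro r S
      simp [hF, Finset.mem_filter, Finset.mem_powerset]
    have hFanti : ∀ r r' : ℝ, r ≤ r' → F r' ⊆ F r := by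
      intro r r' hrr S hS
      rw [hmemF] at hS ⊢
      exact ⟨hS.1, fun s hs s' hs' hne => le_trans hrr (hS.2 s hs s' hs' hne)⟩
    set f : ℕ → ℕ := fun k => (F ((2 * lam) ^ (k + 1) * ε)).sup Finset.card with hf
    have hfanti : ∀ k, f (k + 1) ≤ f k := by
      intro k
      apply Finset.sup_mono
      apply hFanti
      have : (2 * lam) ^ (k + 1) ≤ (2 * lam) ^ (k + 2) :=
        pow_le_pow_right₀ (by linarith) (by omega)
      nlinarith
    have hf0 : f 0 ≤ N - 1 := by
      apply Finset.sup_le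
      intro S hS
      rw [hmemF] at hS
      have hSA : S ⊆ A := hS.1
      have hSne : S ≠ A := by
        intro hSeq
        subst hSeq
        have := hS.2 a₀ ha₀ b₀ hb₀ hab₀
        have hp : (2 * lam) ^ (0 + 1) * ε = 2 * lam * ε := by ring
        rw [hp] at this
        linarith
      have : S.card < A.card := Finset.card_lt_card (lt_of_le_of_ne hSA hSne)
      omega
    have hfpos : ∀ k, 1 ≤ f k := by
      intro k
      have : ({a₀} : Finset E) ∈ F ((2 * lam) ^ (k + 1) * ε) := by
        rw [hmemF]
        refine ⟨Finset.singleton_subset_iff.mpr ha₀, ?_⟩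
        intro s hs s' hs' hne
        rw [Finset.mem_singleton] at hs hs'
        exact absurd (hs.trans hs'.symm) hne
      calc 1 = ({a₀} : Finset E).card := by simp
        _ ≤ f k := Finset.le_sup this
    obtain ⟨k, hkM, hkeq⟩ := antitone_pigeon f (N - 1) hfanti hf0 (hfpos (N - 1))
    -- choose a maximal separated set at scale `(2λ)^(k+2) ε`
    have hFne : (F ((2 * lam) ^ (k + 2) * ε)).Nonempty := by
      refine ⟨∅, ?_⟩
      rw [hmemF]
      exact ⟨Finset.empty_subset A, fun s hs => absurd hs (Finset.notMem_empty s)⟩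
    obtain ⟨S, hSmem, hScard⟩ :=
      Finset.exists_mem_eq_sup (F ((2 * lam) ^ (k + 2) * ε)) hFne Finset.card
    rw [hmemF] at hSmem
    obtain ⟨hSA, hSsep⟩ := hSmem
    set R : ℝ := (2 * lam) ^ (k + 1) * ε with hR
    have hRpos : 0 < R := by positivity
    refine ⟨S, hSA, R, ⟨?_, ?_⟩, ?_, ?_⟩
    · -- ε ≤ R
      have : (1:ℝ) ≤ (2 * lam) ^ (k + 1) := one_le_pow₀ h2.le
      nlinarith
    · -- R < (2λ)^N ε
      have : (2 * lam) ^ (k + 1) < (2 * lam) ^ N :=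
        pow_lt_pow_right₀ h2 (by omega)
      nlinarith
    · -- separation
      intro s hs s' hs' hne
      have := hSsep s hs s' hs' hne
      calc 2 * lam * R = (2 * lam) ^ (k + 2) * ε := by rw [hR]; ring
        _ ≤ ‖s - s'‖ := this
    · -- covering
      intro a ha
      by_cases haS : a ∈ S
      · exact ⟨a, haS, by simp [hRpos.le]⟩
      · have hins : ¬ (∀ s ∈ insert a S, ∀ s' ∈ insert a S, s ≠ s' →
            (2 * lam) ^ (k + 1) * ε ≤ ‖s - s'‖) := by
          intro hP
          have hmem : insert a S ∈ F ((2 * lam) ^ (k + 1) * ε) := by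
            rw [hmemF]
            exact ⟨Finset.insert_subset ha hSA, hP⟩
          have h1 : (insert a S).card ≤ f k := Finset.le_sup hmem
          have h2' : (insert a S).card = S.card + 1 := Finset.card_insert_of_notMem haS
          have h3 : f (k + 1) = S.card := hScard
          omega
        push_neg at hins
        obtain ⟨x, hx, y, hy, hxy, hd⟩ := hins
        rw [Finset.mem_insert] at hx hy
        have hsmall : ∀ s ∈ S, ∀ s' ∈ S, s ≠ s' → (2 * lam) ^ (k + 1) * ε ≤ ‖s - s'‖ := by
          intro s hs s' hs' hne
          refine le_trans ?_ (hSsep s hs s' hs' hne)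
          have : (2 * lam) ^ (k + 1) ≤ (2 * lam) ^ (k + 2) :=
            pow_le_pow_right₀ (by linarith) (by omega)
          nlinarith
        rcases hx with hx | hx
        · rcases hy with hy | hy
          · exact absurd (hx.trans hy.symm) hxy
          · subst hx
            exact ⟨y, hy, hd.le⟩
        · rcases hy with hy | hy
          · subst hy
            refine ⟨x, hx, ?_⟩
            rw [norm_sub_rev] at hd
            exact hd.le
          · exact absurd (hsmall x hx y hy hxy) (not_le.mpr hd)
end

section
/- There exists a positive constant μ > 0, depending only on the homogeneity exponent κ, the number of bodies N, and the masses, such that for every configuration x ∈ E^N and every T > 0 one has φ(x,x,T) ≤ μ T^{(1−κ)/(1+κ)}. -/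
open MeasureTheory Set
open scoped ENNReal

/-!
The loop leaves `x` along the fixed direction `v i = rank(i) • e`, where the bodies are ranked by
their projections on a unit vector `e`, and comes back along the same path:
`γ t = x + (min t (T - t)) ^ α • v` with `α = 1 / (1 + κ)`. The ranking keeps every mutual
distance at least `(min t (T - t)) ^ α`, so both the kinetic and the potential part of the
Lagrangian are `O(t ^ (2α - 2) + (T - t) ^ (2α - 2))`. As `2α - 2 > -1`, this is integrable, with
integral a multiple of `T ^ (2α - 1) = T ^ ((1 - κ) / (1 + κ))`.
-/

section Tent

variable {T α : ℝ}

noncomputable def tent (T α t : ℝ) : ℝ := min t (T - t) ^ α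

-- At `T / 2` this is the right derivative of `tent`, as the one-sided FTC below requires.
noncomputable def tentDeriv (T α t : ℝ) : ℝ :=
  if t < T / 2 then α * t ^ (α - 1) else -(α * (T - t) ^ (α - 1))

theorem tent_zero (hT : 0 ≤ T) (hα : α ≠ 0) : tent T α 0 = 0 := by
  simp [tent, hT, Real.zero_rpow hα]

theorem tent_self (hT : 0 ≤ T) (hα : α ≠ 0) : tent T α T = 0 := by
  simp [tent, hT, Real.zero_rpow hα]

theorem tent_pos {t : ℝ} (ht : t ∈ Ioo 0 T) : 0 < tent T α t :=
  Real.rpow_pos_of_pos (lt_min ht.1 (sub_pos.2 ht.2)) α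

theorem tent_rpow_le {t : ℝ} (ht : t ∈ Ioo 0 T) (q : ℝ) :
    tent T α t ^ q ≤ t ^ (α * q) + (T - t) ^ (α * q) := by
  have h0 : 0 ≤ t := ht.1.le
  have h1 : 0 ≤ T - t := sub_nonneg.2 ht.2.le
  rw [tent, ← Real.rpow_mul (le_min h0 h1)]
  rcases min_choice t (T - t) with h | h <;> rw [h]
  · linarith [Real.rpow_nonneg h1 (α * q)]
  · linarith [Real.rpow_nonneg h0 (α * q)]

theorem tentDeriv_sq_le {t : ℝ} (ht : t ∈ Ioo 0 T) :
    tentDeriv T α t ^ 2 ≤ α ^ 2 * (t ^ (2 * α - 2) + (T - t) ^ (2 * α - 2)) := by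
  have h0 : 0 ≤ t := ht.1.le
  have h1 : 0 ≤ T - t := sub_nonneg.2 ht.2.le
  have hsq : ∀ u : ℝ, 0 ≤ u → (α * u ^ (α - 1)) ^ 2 = α ^ 2 * u ^ (2 * α - 2) := by
    intro u hu
    rw [mul_pow, ← Real.rpow_mul_natCast hu]
    ring_nf
  unfold tentDeriv
  split_ifs
  · rw [hsq t h0]
    nlinarith [Real.rpow_nonneg h1 (2 * α - 2), sq_nonneg α]
  · rw [neg_sq, hsq (T - t) h1]
    nlinarith [Real.rpow_nonneg h0 (2 * α - 2), sq_nonneg α]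

theorem hasDerivWithinAt_tent {t : ℝ} (ht : t ∈ Ioo 0 T) :
    HasDerivWithinAt (tent T α) (tentDeriv T α t) (Ioi t) t := by
  by_cases hlt : t < T / 2
  · rw [tentDeriv, if_pos hlt]
    refine ((Real.hasDerivAt_rpow_const (Or.inl ht.1.ne')).congr_of_eventuallyEq ?_)
      |>.hasDerivWithinAt
    filter_upwards [Iio_mem_nhds hlt] with s hs
    rw [tent, min_eq_left (by linarith [mem_Iio.1 hs])]
  · rw [tentDeriv, if_neg hlt]
    have hright := ((hasDerivAt_id' t).const_sub T).rpow_const (p := α)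
      (Or.inl (sub_pos.2 ht.2).ne')
    refine (hright.hasDerivWithinAt.congr (fun s hs => ?_) ?_).congr_deriv (by ring)
    · rw [tent, min_eq_right (by linarith [mem_Ioi.1 hs])]
    · rw [tent, min_eq_right (by linarith)]

theorem intervalIntegrable_tentDeriv (hα : 0 < α) (hT : 0 ≤ T) :
    IntervalIntegrable (tentDeriv T α) volume 0 T := by
  have hr : -1 < α - 1 := by linarith
  have hleft : IntervalIntegrable (tentDeriv T α) volume 0 (T / 2) := by
    refine ((intervalIntegral.intervalIntegrable_rpow' hr).const_mul α).congr_uIoo ?_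
    intro s hs
    rw [uIoo_of_le (by linarith)] at hs
    simp [tentDeriv, hs.2]
  have hright : IntervalIntegrable (tentDeriv T α) volume (T / 2) T := by
    have h := ((intervalIntegral.intervalIntegrable_rpow' (a := 0) (b := T / 2) hr).comp_sub_left
      T).const_mul α |>.neg
    rw [sub_zero, show T - T / 2 = T / 2 by ring] at h
    refine h.symm.congr_uIoo ?_
    intro s hs
    rw [uIoo_of_le (by linarith)] at hs
    simp [tentDeriv, not_lt.2 hs.1.le]
  exact hleft.trans hright

theorem integral_tentDeriv (hα : 0 < α) {t : ℝ} (ht : t ∈ Icc 0 T) :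
    ∫ s in (0)..t, tentDeriv T α s = tent T α t := by
  have hT : 0 ≤ T := ht.1.trans ht.2
  rw [intervalIntegral.integral_eq_sub_of_hasDeriv_right_of_le ht.1 ?_
    (fun s hs => hasDerivWithinAt_tent ⟨hs.1, hs.2.trans_le ht.2⟩)
    ((intervalIntegrable_tentDeriv hα hT).mono_set ?_), tent_zero hT hα.ne', sub_zero]
  · exact ((continuous_id.min (continuous_const.sub continuous_id)).rpow_const
      fun _ => Or.inr hα.le).continuousOn
  · rw [uIcc_of_le ht.1, uIcc_of_le hT]
    exact Icc_subset_Icc le_rfl ht.2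

end Tent

theorem intervalIntegrable_rpow_add_rpow_sub {β : ℝ} (hβ : -1 < β) (T : ℝ) :
    IntervalIntegrable (fun t => t ^ β + (T - t) ^ β) volume 0 T := by
  have h := (intervalIntegral.intervalIntegrable_rpow' (a := 0) (b := T) hβ).comp_sub_left T
  rw [sub_zero, sub_self] at h
  exact (intervalIntegral.intervalIntegrable_rpow' hβ).add h.symm

theorem integral_rpow_add_rpow_sub {β : ℝ} (hβ : -1 < β) (T : ℝ) :
    ∫ t in (0)..T, (t ^ β + (T - t) ^ β) = 2 * T ^ (β + 1) / (β + 1) := by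
  have h := (intervalIntegral.intervalIntegrable_rpow' (a := 0) (b := T) hβ).comp_sub_left T
  rw [sub_zero, sub_self] at h
  rw [intervalIntegral.integral_add (intervalIntegral.intervalIntegrable_rpow' hβ) h.symm,
    intervalIntegral.integral_comp_sub_left (fun t => t ^ β), sub_zero, sub_self,
    integral_rpow (Or.inl hβ), Real.zero_rpow (by linarith)]
  ring

theorem setLIntegral_Ioc_le_ofReal_integral {F : ℝ → ℝ≥0∞} {g : ℝ → ℝ} {a b : ℝ}
    (hab : a ≤ b) (hg : IntervalIntegrable g volume a b) (hg0 : ∀ t ∈ Ioo a b, 0 ≤ g t)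
    (hF : ∀ t ∈ Ioo a b, F t ≤ ENNReal.ofReal (g t)) :
    ∫⁻ t in Ioc a b, F t ≤ ENNReal.ofReal (∫ t in a..b, g t) := by
  rw [intervalIntegral.integral_of_le hab, ← restrict_Ioo_eq_restrict_Ioc,
    ofReal_integral_eq_lintegral_ofReal ((hg.1).mono_set Ioo_subset_Ioc_self)
      (ae_restrict_of_forall_mem measurableSet_Ioo hg0)]
  exact lintegral_mono_ae (ae_restrict_of_forall_mem measurableSet_Ioo hF)

section Energy

variable {E : Type*} [NormedAddCommGroup E] {N : ℕ}

noncomputable def pairMass (m : Fin N → ℝ) : ℝ :=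
  ∑ p ∈ Finset.univ.filter (fun p : Fin N × Fin N => p.1 < p.2), m p.1 * m p.2

theorem pairMass_nonneg {m : Fin N → ℝ} (hm : ∀ i, 0 ≤ m i) : 0 ≤ pairMass m :=
  Finset.sum_nonneg fun _ _ => mul_nonneg (hm _) (hm _)

theorem pot_le_of_pairwise_le_norm_sub {κ r : ℝ} (hκ : 0 ≤ κ)
    (hr : 0 < r) {m : Fin N → ℝ} (hm : ∀ i, 0 ≤ m i) {y : Fin N → E}
    (hy : Pairwise fun i j => r ≤ ‖y i - y j‖) :
    pot κ m y ≤ ENNReal.ofReal (pairMass m * r ^ (-(2 * κ))) := by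
  rw [pairMass, Finset.sum_mul, ENNReal.ofReal_sum_of_nonneg
    fun p _ => mul_nonneg (mul_nonneg (hm _) (hm _)) (Real.rpow_nonneg hr.le _)]
  refine Finset.sum_le_sum fun p hp => ?_
  rw [ENNReal.ofReal_mul (mul_nonneg (hm _) (hm _)), ← ENNReal.ofReal_rpow_of_pos hr]
  refine mul_le_mul_right ?_ _
  rw [ENNReal.rpow_neg, ENNReal.rpow_neg]
  exact ENNReal.inv_le_inv.2 (ENNReal.rpow_le_rpow (ENNReal.ofReal_le_ofReal
    (hy (Finset.mem_filter.1 hp).2.ne)) (by linarith))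

theorem kinetic_smul_le [NormedSpace ℝ E] {m : Fin N → ℝ} (hm : ∀ i, 0 ≤ m i)
    {v : Fin N → E} {R : ℝ} (hv : ∀ i, ‖v i‖ ≤ R) (c : ℝ) :
    1 / 2 * ∑ i, m i * ‖(c • v) i‖ ^ 2 ≤ (∑ i, m i) * R ^ 2 / 2 * c ^ 2 := by
  have hsum : ∑ i, m i * ‖(c • v) i‖ ^ 2 ≤ ∑ i, m i * (R ^ 2 * c ^ 2) := by
    refine Finset.sum_le_sum fun i _ => mul_le_mul_of_nonneg_left ?_ (hm i)
    rw [Pi.smul_apply, norm_smul, mul_pow, Real.norm_eq_abs, sq_abs, mul_comm]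
    exact mul_le_mul_of_nonneg_right (pow_le_pow_left₀ (norm_nonneg _) (hv i) 2) (sq_nonneg c)
  rw [← Finset.sum_mul] at hsum
  linarith

end Energy

section Loop

variable {E : Type*} [NormedAddCommGroup E] [InnerProductSpace ℝ E] {N : ℕ}

noncomputable def rankDirection (σ : Equiv.Perm (Fin N)) (e : E) : Fin N → E :=
  fun k => ((σ k : ℕ) : ℝ) • e

theorem norm_rankDirection_le (σ : Equiv.Perm (Fin N)) {e : E} (he : ‖e‖ = 1) (i : Fin N) :
    ‖rankDirection σ e i‖ ≤ N := by
  simp [rankDirection, norm_smul, he]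

theorem exists_perm_pairwise_le_norm_sub (x : Fin N → E) {e : E} (he : ‖e‖ = 1) :
    ∃ σ : Equiv.Perm (Fin N), ∀ s : ℝ, 0 ≤ s → Pairwise fun i j =>
      s ≤ ‖(x + s • rankDirection σ e) i - (x + s • rankDirection σ e) j‖ := by
  set w : Fin N → ℝ := fun i => inner ℝ (x i) e
  refine ⟨(Tuple.sort w).symm, fun s hs => ?_⟩
  set σ := (Tuple.sort w).symm
  have hordered : ∀ i j, σ i < σ j →
      s ≤ ‖(x + s • rankDirection σ e) j - (x + s • rankDirection σ e) i‖ := by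
    intro i j hij
    have hw : w i ≤ w j := by
      simpa [σ, Function.comp] using Tuple.monotone_sort w hij.le
    have hrank : ((σ i : ℕ) : ℝ) + 1 ≤ (σ j : ℕ) := by exact_mod_cast hij
    calc s ≤ (w j - w i) + s * (((σ j : ℕ) : ℝ) - (σ i : ℕ)) := by nlinarith
      _ = inner ℝ ((x + s • rankDirection σ e) j -
            (x + s • rankDirection σ e) i) e := by
        simp only [rankDirection, Pi.add_apply, Pi.smul_apply, smul_smul, inner_sub_left,
          inner_add_left, real_inner_smul_left, real_inner_self_eq_norm_sq, he, w]
        ring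
      _ ≤ _ := by simpa [he] using real_inner_le_norm _ e
  intro i j hij
  rcases (σ.injective.ne hij).lt_or_gt with h | h
  · rw [norm_sub_rev]; exact hordered i j h
  · exact hordered j i h

theorem phiT_le_action {κ T : ℝ} {m : Fin N → ℝ} {x y : Fin N → E} {γ γ' : ℝ → Fin N → E}
    (hγ : ACPair γ γ' 0 T) (h0 : γ 0 = x) (hT : γ T = y) :
    phiT κ m x y T ≤ action κ m γ γ' 0 T :=
  iInf₂_le_of_le γ γ' (iInf_le _ ⟨hγ, h0, hT⟩)

theorem acPair_add_smul [CompleteSpace E] {x v : Fin N → E} {f h : ℝ → ℝ} {T : ℝ}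
    (hh : IntervalIntegrable h volume 0 T) (hf : ∀ t ∈ Icc 0 T, ∫ s in (0)..t, h s = f t) :
    ACPair (fun t => x + f t • v) (fun t => h t • v) 0 T := by
  refine ⟨⟨hh.1.smul_const v, hh.2.smul_const v⟩, fun t ht => ?_⟩
  have hf0 : f 0 = 0 := by rw [← hf 0 ⟨le_rfl, ht.1.trans ht.2⟩, intervalIntegral.integral_same]
  simp only [hf0, zero_smul, add_zero]
  rw [intervalIntegral.integral_smul_const, hf t ht]

theorem lagrangian_tentLoop_le {κ α T R : ℝ} (hκ : 0 ≤ κ) (hακ : α * (-(2 * κ)) = 2 * α - 2)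
    {m : Fin N → ℝ} (hm : ∀ i, 0 ≤ m i) {x v : Fin N → E} (hv : ∀ i, ‖v i‖ ≤ R)
    (hsep : ∀ s : ℝ, 0 ≤ s → Pairwise fun i j => s ≤ ‖(x + s • v) i - (x + s • v) j‖)
    {t : ℝ} (ht : t ∈ Ioo 0 T) :
    ENNReal.ofReal (1 / 2 * ∑ i, m i * ‖(tentDeriv T α t • v) i‖ ^ 2) +
        pot κ m (x + tent T α t • v) ≤
      ENNReal.ofReal (((∑ i, m i) * R ^ 2 * α ^ 2 / 2 + pairMass m) *
        (t ^ (2 * α - 2) + (T - t) ^ (2 * α - 2))) := by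
  have hG : 0 ≤ t ^ (2 * α - 2) + (T - t) ^ (2 * α - 2) :=
    add_nonneg (Real.rpow_nonneg ht.1.le _) (Real.rpow_nonneg (sub_nonneg.2 ht.2.le) _)
  have hM : 0 ≤ ∑ i, m i := Finset.sum_nonneg fun i _ => hm i
  have hC := pairMass_nonneg hm
  calc _ ≤ ENNReal.ofReal ((∑ i, m i) * R ^ 2 / 2 * tentDeriv T α t ^ 2) +
        ENNReal.ofReal (pairMass m * tent T α t ^ (-(2 * κ))) :=
      add_le_add (ENNReal.ofReal_le_ofReal (kinetic_smul_le hm hv _))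
        (pot_le_of_pairwise_le_norm_sub hκ (tent_pos ht) hm (hsep _ (tent_pos ht).le))
    _ ≤ ENNReal.ofReal ((∑ i, m i) * R ^ 2 / 2 *
          (α ^ 2 * (t ^ (2 * α - 2) + (T - t) ^ (2 * α - 2)))) +
        ENNReal.ofReal (pairMass m * (t ^ (2 * α - 2) + (T - t) ^ (2 * α - 2))) := by
      gcongr
      · exact tentDeriv_sq_le ht
      · rw [← hακ]; exact tent_rpow_le ht _
    _ = _ := by
      rw [← ENNReal.ofReal_add (by positivity) (by positivity)]
      ring_nf

noncomputable def loopActionConst (κ : ℝ) (m : Fin N → ℝ) : ℝ :=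
  ((∑ i, m i) * N ^ 2 / (1 + κ) ^ 2 + 2 * pairMass m) * (1 + κ) / (1 - κ)

theorem loopActionConst_nonneg {κ : ℝ} (hκ : κ ∈ Ioo 0 1) {m : Fin N → ℝ}
    (hm : ∀ i, 0 ≤ m i) : 0 ≤ loopActionConst κ m := by
  have hM : 0 ≤ ∑ i, m i := Finset.sum_nonneg fun i _ => hm i
  have hC := pairMass_nonneg hm
  have : 0 < 1 - κ := sub_pos.2 hκ.2
  have : 0 < 1 + κ := by linarith [hκ.1]
  unfold loopActionConst
  positivity

theorem phiT_self_le [CompleteSpace E] [Nontrivial E] {κ : ℝ} (hκ : κ ∈ Ioo 0 1) {m : Fin N → ℝ}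
    (hm : ∀ i, 0 ≤ m i) (x : Fin N → E) {T : ℝ} (hT : 0 < T) :
    phiT κ m x x T ≤ ENNReal.ofReal (loopActionConst κ m * T ^ ((1 - κ) / (1 + κ))) := by
  obtain ⟨e, he⟩ := exists_norm_eq E zero_le_one
  obtain ⟨σ, hsep⟩ := exists_perm_pairwise_le_norm_sub x he
  set v := rankDirection σ e
  set α : ℝ := (1 + κ)⁻¹ with hα_def
  have h1κ : 0 < 1 + κ := by linarith [hκ.1]
  have hα : 0 < α := inv_pos.2 h1κ
  have hακ1 : α * (1 + κ) = 1 := inv_mul_cancel₀ h1κ.ne'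
  -- this choice of `α` makes kinetic and potential energy blow up at the same rate
  have hακ : α * (-(2 * κ)) = 2 * α - 2 := by linear_combination -2 * hακ1
  have hβ : 2 * α - 2 + 1 = (1 - κ) / (1 + κ) := by
    rw [eq_div_iff h1κ.ne']; linear_combination 2 * hακ1
  have hβ1 : -1 < 2 * α - 2 := by
    have := div_pos (sub_pos.2 hκ.2) h1κ
    linarith
  have hA : 0 ≤ (∑ i, m i) * (N : ℝ) ^ 2 * α ^ 2 / 2 + pairMass m := by
    have hM : 0 ≤ ∑ i, m i := Finset.sum_nonneg fun i _ => hm i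
    have hC := pairMass_nonneg hm
    positivity
  have hγ : ACPair (fun t => x + tent T α t • v) (fun t => tentDeriv T α t • v) 0 T :=
    acPair_add_smul (intervalIntegrable_tentDeriv hα hT.le) fun t ht => integral_tentDeriv hα ht
  refine (phiT_le_action hγ (by simp [tent_zero hT.le hα.ne'])
    (by simp [tent_self hT.le hα.ne'])).trans ?_
  calc action κ m _ _ 0 T
      ≤ ENNReal.ofReal (∫ t in (0)..T, ((∑ i, m i) * (N : ℝ) ^ 2 * α ^ 2 / 2 + pairMass m) *
          (t ^ (2 * α - 2) + (T - t) ^ (2 * α - 2))) :=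
        setLIntegral_Ioc_le_ofReal_integral hT.le
          ((intervalIntegrable_rpow_add_rpow_sub hβ1 T).const_mul _)
          (fun t ht => mul_nonneg hA (add_nonneg (Real.rpow_nonneg ht.1.le _)
            (Real.rpow_nonneg (sub_nonneg.2 ht.2.le) _)))
          fun t ht => lagrangian_tentLoop_le hκ.1.le hακ hm (norm_rankDirection_le σ he) hsep ht
    _ = _ := by
      rw [intervalIntegral.integral_const_mul, integral_rpow_add_rpow_sub hβ1, hβ, loopActionConst]
      congr 1
      generalize T ^ ((1 - κ) / (1 + κ)) = τ
      have h1κ' : 1 - κ ≠ 0 := (sub_pos.2 hκ.2).ne'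
      rw [hα_def]
      field_simp

end Loop

theorem phi_diag_bound_general
    {E : Type*} [NormedAddCommGroup E] [InnerProductSpace ℝ E] [FiniteDimensional ℝ E]
    [Nontrivial E]
    (κ : ℝ) (hκ : κ ∈ Ioo (0:ℝ) 1) (N : ℕ)
    (m : Fin N → ℝ) (hm : ∀ i, 0 < m i) :
    ∃ μ > (0:ℝ), ∀ x : Fin N → E, ∀ T > (0:ℝ),
      phiT κ m x x T ≤ ENNReal.ofReal (μ * T ^ ((1 - κ) / (1 + κ))) := by
  have hm' : ∀ i, 0 ≤ m i := fun i => (hm i).le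
  refine ⟨loopActionConst κ m + 1, by linarith [loopActionConst_nonneg hκ hm'], fun x T hT => ?_⟩
  refine (phiT_self_le hκ hm' x hT).trans (ENNReal.ofReal_le_ofReal ?_)
  gcongr
  linarith

/-- There is `μ > 0`, depending only on `κ`, `N` and the masses, such that
`φ(x,x,T) ≤ μ T^((1-κ)/(1+κ))` for every configuration `x` and every `T > 0`. -/
theorem phi_diag_bound
    {E : Type*} [NormedAddCommGroup E] [InnerProductSpace ℝ E] [FiniteDimensional ℝ E]
    [Nontrivial E]
    (κ : ℝ) (hκ : κ ∈ Ioo (0:ℝ) 1) (N : ℕ) (hN : 2 ≤ N)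
    (m : Fin N → ℝ) (hm : ∀ i, 0 < m i) :
    ∃ μ > (0:ℝ), ∀ x : Fin N → E, ∀ T > (0:ℝ),
      phiT κ m x x T ≤ ENNReal.ofReal (μ * T ^ ((1 - κ) / (1 + κ))) :=
  phi_diag_bound_general κ hκ N m hm
end

section
/- For every λ > 0 and all configurations x, y ∈ E^N, the critical action potential satisfies the homogeneity relation φ(λx, λy) = λ^{1−κ} φ(x,y). -/
/-!
Under the space–time rescaling `x ↦ λ x`, `t ↦ λ^(1+κ) t` a velocity is multiplied by `λ^(-κ)`,
so the kinetic energy scales by `λ^(-2κ)`, exactly like the potential `U_κ`; with the Jacobian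
`λ^(1+κ)` of the time change, the action of every admissible curve is multiplied by `λ^(1-κ)`.
Taking infima gives `φ(λx, λy) ≤ λ^(1-κ) φ(x, y)`, and the same inequality for `λ⁻¹` at
`(λx, λy)` gives the reverse one.
-/

open MeasureTheory Set
open scoped ENNReal

open Real

theorem setLIntegral_Ioc_comp_inv_mul {c : ℝ} (hc : 0 < c) (g : ℝ → ℝ≥0∞) (a b : ℝ) :
    ∫⁻ t in Ioc (c * a) (c * b), g (c⁻¹ * t) = ENNReal.ofReal c * ∫⁻ s in Ioc a b, g s := by
  have hc' : c⁻¹ ≠ 0 := inv_ne_zero hc.ne'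
  have hemb : MeasurableEmbedding (c⁻¹ * ·) :=
    (Homeomorph.mulLeft₀ c⁻¹ hc').isClosedEmbedding.measurableEmbedding
  have hpre : (c⁻¹ * ·) ⁻¹' Ioc a b = Ioc (c * a) (c * b) := by
    rw [preimage_const_mul_Ioc₀ _ _ (inv_pos.2 hc), div_inv_eq_mul, div_inv_eq_mul,
      mul_comm a, mul_comm b]
  rw [← hpre, ← hemb.lintegral_map, ← hemb.restrict_map, Real.map_volume_mul_left hc', inv_inv,
    abs_of_pos hc, Measure.restrict_smul, lintegral_smul_measure, smul_eq_mul]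

noncomputable def rescale {F : Type*} [SMul ℝ F] (a c : ℝ) (γ : ℝ → F) : ℝ → F :=
  fun t => a • γ (c⁻¹ * t)

section Lagrangian

variable {E : Type*} [NormedAddCommGroup E] {N : ℕ}

noncomputable def lagrangian (κ : ℝ) (m : Fin N → ℝ) (x v : Fin N → E) : ℝ≥0∞ :=
  ENNReal.ofReal ((1 / 2) * ∑ i, m i * ‖v i‖ ^ 2) + pot κ m x

theorem action_eq_lintegral_lagrangian (κ : ℝ) (m : Fin N → ℝ) (γ γ' : ℝ → Fin N → E)
    (a b : ℝ) : action κ m γ γ' a b = ∫⁻ t in Ioc a b, lagrangian κ m (γ t) (γ' t) :=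
  rfl

variable [NormedSpace ℝ E]

theorem pot_smul (κ : ℝ) (m : Fin N → ℝ) {lam : ℝ} (hl : 0 < lam) (x : Fin N → E) :
    pot κ m (lam • x) = ENNReal.ofReal (lam ^ (-(2 * κ))) * pot κ m x := by
  rw [pot, pot, Finset.mul_sum]
  refine Finset.sum_congr rfl fun p _ => ?_
  rw [Pi.smul_apply, Pi.smul_apply, ← smul_sub, norm_smul, Real.norm_of_nonneg hl.le,
    ENNReal.ofReal_mul hl.le, ENNReal.mul_rpow_of_ne_top ENNReal.ofReal_ne_top
    ENNReal.ofReal_ne_top, ENNReal.ofReal_rpow_of_pos hl]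
  ring

theorem sum_mul_norm_smul_sq (m : Fin N → ℝ) (a : ℝ) (v : Fin N → E) :
    ∑ i, m i * ‖(a • v) i‖ ^ 2 = a ^ 2 * ∑ i, m i * ‖v i‖ ^ 2 := by
  simp only [Pi.smul_apply, norm_smul, Real.norm_eq_abs, mul_pow, sq_abs, Finset.mul_sum]
  exact Finset.sum_congr rfl fun i _ => by ring

theorem lagrangian_smul (κ : ℝ) (m : Fin N → ℝ) {lam : ℝ} (hl : 0 < lam) (x v : Fin N → E) :
    lagrangian κ m (lam • x) (lam ^ (-κ) • v)
      = ENNReal.ofReal (lam ^ (-(2 * κ))) * lagrangian κ m x v := by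
  have hsq : (lam ^ (-κ)) ^ 2 = lam ^ (-(2 * κ)) := by
    rw [← rpow_natCast, ← rpow_mul hl.le]
    ring_nf
  rw [lagrangian, lagrangian, sum_mul_norm_smul_sq, hsq, pot_smul κ m hl, mul_add,
    mul_left_comm, ENNReal.ofReal_mul (rpow_nonneg hl.le _)]

theorem action_rescale (κ : ℝ) (m : Fin N → ℝ) (γ γ' : ℝ → Fin N → E) {lam : ℝ} (hl : 0 < lam)
    (a b : ℝ) :
    action κ m (rescale lam (lam ^ (1 + κ)) γ)
        (rescale (lam * (lam ^ (1 + κ))⁻¹) (lam ^ (1 + κ)) γ') (lam ^ (1 + κ) * a)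
        (lam ^ (1 + κ) * b)
      = ENNReal.ofReal (lam ^ (1 - κ)) * action κ m γ γ' a b := by
  set c := lam ^ (1 + κ) with hc_def
  have hc : 0 < c := rpow_pos_of_pos hl _
  have hvel : lam * c⁻¹ = lam ^ (-κ) := by
    rw [eq_comm, eq_mul_inv_iff_mul_eq₀ hc.ne', hc_def, ← rpow_add hl]
    ring_nf
    exact rpow_one lam
  rw [action_eq_lintegral_lagrangian, action_eq_lintegral_lagrangian]
  simp only [_root_.rescale, hvel, lagrangian_smul κ m hl]
  rw [setLIntegral_Ioc_comp_inv_mul hc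
      (fun s => ENNReal.ofReal (lam ^ (-(2 * κ))) * lagrangian κ m (γ s) (γ' s)),
    lintegral_const_mul' _ _ ENNReal.ofReal_ne_top, ← mul_assoc, ← ENNReal.ofReal_mul hc.le,
    hc_def, ← rpow_add hl]
  ring_nf

end Lagrangian

section ActionPotential

variable {E : Type*} [NormedAddCommGroup E] [InnerProductSpace ℝ E] {N : ℕ}

theorem ACPair.rescale {γ γ' : ℝ → Fin N → E} {a b c : ℝ} (hc : 0 < c) (lam : ℝ)
    (h : ACPair γ γ' a b) :
    ACPair (rescale lam c γ) (rescale (lam * c⁻¹) c γ') (c * a) (c * b) := by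
  obtain ⟨hint, hftc⟩ := h
  refine ⟨?_, fun t ht => ?_⟩
  · have hcomp := hint.comp_mul_left (c := c⁻¹)
    rw [div_inv_eq_mul, div_inv_eq_mul, mul_comm a, mul_comm b] at hcomp
    exact hcomp.smul (lam * c⁻¹)
  · have hs : c⁻¹ * t ∈ Icc a b :=
      ⟨(le_inv_mul_iff₀ hc).2 ht.1, (inv_mul_le_iff₀ hc).2 ht.2⟩
    simp only [_root_.rescale]
    rw [intervalIntegral.integral_smul,
      intervalIntegral.integral_comp_mul_left γ' (inv_ne_zero hc.ne'),
      inv_mul_cancel_left₀ hc.ne', smul_smul, inv_inv, inv_mul_cancel_right₀ hc.ne',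
      hftc _ hs, smul_add]

theorem phiT_smul_le (κ : ℝ) (m : Fin N → ℝ) (x y : Fin N → E) {lam : ℝ} (hl : 0 < lam)
    (T : ℝ) :
    phiT κ m (lam • x) (lam • y) (lam ^ (1 + κ) * T)
      ≤ ENNReal.ofReal (lam ^ (1 - κ)) * phiT κ m x y T := by
  have hk : ENNReal.ofReal (lam ^ (1 - κ)) ≠ 0 := by
    simpa using rpow_pos_of_pos hl _
  have hc : 0 < lam ^ (1 + κ) := rpow_pos_of_pos hl _
  simp only [phiT, ENNReal.mul_iInf_of_ne hk ENNReal.ofReal_ne_top]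
  refine le_iInf₂ fun γ γ' => le_iInf fun ⟨hac, h0, hT⟩ => ?_
  have hac' := hac.rescale hc lam
  have haction := action_rescale κ m γ γ' hl 0 T
  rw [mul_zero] at hac' haction
  refine iInf₂_le_of_le _ _ (iInf_le_of_le ⟨hac', ?_, ?_⟩ haction.le)
  · simp [_root_.rescale, h0]
  · simp [_root_.rescale, inv_mul_cancel_left₀ hc.ne', hT]

theorem phi_smul_le (κ : ℝ) (m : Fin N → ℝ) (x y : Fin N → E) {lam : ℝ} (hl : 0 < lam) :
    phi κ m (lam • x) (lam • y) ≤ ENNReal.ofReal (lam ^ (1 - κ)) * phi κ m x y := by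
  have hk : ENNReal.ofReal (lam ^ (1 - κ)) ≠ 0 := by
    simpa using rpow_pos_of_pos hl _
  simp only [phi, ENNReal.mul_iInf_of_ne hk ENNReal.ofReal_ne_top]
  refine le_iInf₂ fun T hT => ?_
  exact iInf₂_le_of_le _ (mul_pos (rpow_pos_of_pos hl _) hT) (phiT_smul_le κ m x y hl T)

end ActionPotential

theorem phi_homogeneous_general
    {E : Type*} [NormedAddCommGroup E] [InnerProductSpace ℝ E]
    (κ : ℝ) (N : ℕ)
    (m : Fin N → ℝ) :
    ∀ lam > (0:ℝ), ∀ x y : Fin N → E,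
      phi κ m (lam • x) (lam • y) = ENNReal.ofReal (lam ^ (1 - κ)) * phi κ m x y := by
  intro lam hl x y
  refine le_antisymm (phi_smul_le κ m x y hl) ?_
  have hle := phi_smul_le κ m (lam • x) (lam • y) (inv_pos.2 hl)
  rw [inv_smul_smul₀ hl.ne', inv_smul_smul₀ hl.ne'] at hle
  calc ENNReal.ofReal (lam ^ (1 - κ)) * phi κ m x y
      ≤ ENNReal.ofReal (lam ^ (1 - κ)) *
          (ENNReal.ofReal (lam⁻¹ ^ (1 - κ)) * phi κ m (lam • x) (lam • y)) := by gcongr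
    _ = phi κ m (lam • x) (lam • y) := by
        rw [← mul_assoc, ← ENNReal.ofReal_mul (rpow_nonneg hl.le _),
          ← mul_rpow hl.le (inv_nonneg.2 hl.le), mul_inv_cancel₀ hl.ne', one_rpow,
          ENNReal.ofReal_one, one_mul]

/-- Homogeneity of the action potential: `φ(λx, λy) = λ^(1-κ) φ(x,y)` for `λ > 0`. -/
theorem phi_homogeneous
    {E : Type*} [NormedAddCommGroup E] [InnerProductSpace ℝ E] [FiniteDimensional ℝ E]
    [Nontrivial E]
    (κ : ℝ) (hκ : κ ∈ Ioo (0:ℝ) 1) (N : ℕ) (hN : 2 ≤ N)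
    (m : Fin N → ℝ) (hm : ∀ i, 0 < m i) :
    ∀ lam > (0:ℝ), ∀ x y : Fin N → E,
      phi κ m (lam • x) (lam • y) = ENNReal.ofReal (lam ^ (1 - κ)) * phi κ m x y :=
  phi_homogeneous_general κ N m
end

section
/- Every dominated function u : E^N → ℝ is differentiable Lebesgue-almost everywhere on E^N and is a viscosity subsolution of the critical Hamilton–Jacobi equation |d_x u|² = 2 U_κ(x) on all of E^N; that is, for every C¹ function ψ : E^N → ℝ such that u − ψ attains a maximum at a point x₀ ∈ E^N, one has |d_{x₀}ψ|² ≤ 2 U_κ(x₀) (this holds trivially when U_κ(x₀) = +∞). -/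
open MeasureTheory Set
open scoped ENNReal

/-!
Along the straight segment from `x` to `y` run in time `T`, the action is at most
`T * (½|v|² + sup U_κ)` with `v = (y - x)/T`. The potential is continuous as a map to `[0, ∞]`,
hence bounded near every configuration where it is finite; there a dominated `u` is therefore
locally Lipschitz (take `T = |y - x|`), and since the collision configurations lie in finitely
many proper subspaces, Rademacher's theorem gives differentiability almost everywhere.
At a maximum `x₀` of `u - ψ` the same bound along the ray `x₀ + T v` gives
`-d_{x₀}ψ(v) - ½|v|² ≤ U_κ(x₀)` for every `v`; for `v = -(mᵢ⁻¹ pᵢ)ᵢ`, the Legendre dual of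
`p = d_{x₀}ψ`, the left side is `½|p|²`.
-/

open Filter Function
open scoped NNReal Topology

section Rademacher

variable {V W : Type*} [NormedAddCommGroup V] [NormedSpace ℝ V] [FiniteDimensional ℝ V]
  [MeasurableSpace V] [BorelSpace V] [NormedAddCommGroup W] [NormedSpace ℝ W]
  [FiniteDimensional ℝ W] (μ : Measure V) [μ.IsAddHaarMeasure]

theorem LocallyLipschitzOn.ae_differentiableAt {f : V → W} {s : Set V} (hs : IsOpen s)
    (hf : LocallyLipschitzOn s f) : ∀ᵐ x ∂μ, x ∈ s → DifferentiableAt ℝ f x := by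
  simp only [ae_iff, Classical.not_imp]
  refine measure_null_of_locally_null _ fun x ⟨hxs, _⟩ => ?_
  obtain ⟨K, t, ht, hfK⟩ := hf hxs
  rw [hs.nhdsWithin_eq hxs] at ht
  refine ⟨_, inter_mem_nhdsWithin _ (interior_mem_nhds.2 ht), measure_mono_null ?_
    (ae_iff.1 ((hfK.mono interior_subset).ae_differentiableWithinAt_of_mem (μ := μ)))⟩
  rintro y ⟨⟨-, hy⟩, hyt⟩ hdiff
  exact hy ((hdiff hyt).differentiableAt (isOpen_interior.mem_nhds hyt))

end Rademacher

theorem ae_injective {ι V : Type*} [Fintype ι] [NormedAddCommGroup V] [NormedSpace ℝ V]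
    [FiniteDimensional ℝ V] [Nontrivial V] [MeasurableSpace V] [BorelSpace V]
    (μ : Measure (ι → V)) [μ.IsAddHaarMeasure] : ∀ᵐ x ∂μ, Injective x := by
  classical
  have hne : ∀ i j, ∀ᵐ x ∂μ, i ≠ j → x i ≠ x j := fun i j => by
    rcases eq_or_ne i j with rfl | hij
    · exact .of_forall fun _ h => (h rfl).elim
    let diag : Submodule ℝ (ι → V) :=
      LinearMap.ker ((LinearMap.proj i : (ι → V) →ₗ[ℝ] V) - LinearMap.proj j)
    have hdiag_ne_top : diag ≠ ⊤ := fun htop => by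
      obtain ⟨e, he⟩ := exists_ne (0 : V)
      have hmem : Pi.single i e ∈ diag := htop ▸ Submodule.mem_top
      simp [diag, Pi.single_eq_of_ne' hij] at hmem
      exact he hmem
    refine measure_mono_null (fun x hx => ?_) (Measure.addHaar_submodule μ diag hdiag_ne_top)
    have hxij : x i = x j := not_not.1 fun h => hx fun _ => h
    simpa [diag, sub_eq_zero] using hxij
  filter_upwards [ae_all_iff.2 fun i => ae_all_iff.2 (hne i)] with x hx i j hxij
  exact not_not.1 fun hij => hx i j hij hxij

theorem HasDerivAt.neg_le_of_eventually_sub_le {f : ℝ → ℝ} {f' c : ℝ} (hf : HasDerivAt f f' 0)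
    (h : ∀ᶠ t in 𝓝[>] 0, f 0 - f t ≤ t * c) : -f' ≤ c := by
  have hslope : Tendsto (fun t => t⁻¹ * (f 0 - f t)) (𝓝[>] 0) (𝓝 (-f')) := by
    refine hf.tendsto_slope_zero_right.neg.congr fun t => ?_
    rw [zero_add, smul_eq_mul]
    ring
  refine le_of_tendsto hslope ?_
  filter_upwards [h, self_mem_nhdsWithin] with t ht (htpos : 0 < t)
  rw [inv_mul_le_iff₀ htpos]
  linarith

noncomputable def kineticEnergy {ι V : Type*} [Fintype ι] [SeminormedAddCommGroup V] (m : ι → ℝ)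
    (v : ι → V) : ℝ :=
  (1 / 2) * ∑ i, m i * ‖v i‖ ^ 2

theorem kineticEnergy_nonneg {ι V : Type*} [Fintype ι] [SeminormedAddCommGroup V] {m : ι → ℝ}
    (hm : ∀ i, 0 ≤ m i) (v : ι → V) : 0 ≤ kineticEnergy m v :=
  mul_nonneg (by norm_num) (Finset.sum_nonneg fun i _ => mul_nonneg (hm i) (sq_nonneg _))

theorem kineticEnergy_le {ι V : Type*} [Fintype ι] [SeminormedAddCommGroup V] {m : ι → ℝ}
    (hm : ∀ i, 0 ≤ m i) (v : ι → V) : kineticEnergy m v ≤ (∑ i, m i) / 2 * ‖v‖ ^ 2 := by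
  rw [kineticEnergy, Finset.mul_sum, Finset.sum_div, Finset.sum_mul]
  refine Finset.sum_le_sum fun i _ => ?_
  have hvi : ‖v i‖ ^ 2 ≤ ‖v‖ ^ 2 := by gcongr; exact norm_le_pi_norm v i
  linarith [mul_le_mul_of_nonneg_left hvi (hm i)]

section NBody

variable {E : Type*} [NormedAddCommGroup E] {N : ℕ} {κ : ℝ} {m : Fin N → ℝ}

theorem continuous_pot : Continuous (pot (E := E) κ m) := by
  refine continuous_finsetSum _ fun p _ => ?_
  exact (ENNReal.continuous_const_mul ENNReal.ofReal_ne_top).comp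
    (ENNReal.continuous_rpow_const.comp (ENNReal.continuous_ofReal.comp
      ((continuous_apply p.1).sub (continuous_apply p.2)).norm))

theorem pot_ne_top_of_injective {x : Fin N → E} (hx : Injective x) : pot κ m x ≠ ⊤ := by
  refine ENNReal.sum_ne_top.2 fun p hp => ENNReal.mul_ne_top ENNReal.ofReal_ne_top
    (ENNReal.rpow_ne_top_of_ne_zero ?_ ENNReal.ofReal_ne_top)
  have hne : x p.1 ≠ x p.2 := hx.ne (Finset.mem_filter.1 hp).2.ne
  simpa [sub_eq_zero] using hne

variable [InnerProductSpace ℝ E]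

theorem phi_le_of_segment [CompleteSpace E] {x y : Fin N → E} {T : ℝ} (hT : 0 < T) {C : ℝ≥0∞}
    (hC : ∀ z ∈ segment ℝ x y, pot κ m z ≤ C) :
    phi κ m x y ≤ ENNReal.ofReal T * (ENNReal.ofReal (kineticEnergy m (T⁻¹ • (y - x))) + C) := by
  set v := T⁻¹ • (y - x)
  set γ : ℝ → Fin N → E := fun s => x + s • v
  have hγ : ACPair γ (fun _ => v) 0 T ∧ γ 0 = x ∧ γ T = y := by
    refine ⟨⟨intervalIntegrable_const, fun t _ => by simp [γ, intervalIntegral.integral_const]⟩,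
      by simp [γ], ?_⟩
    simp [γ, v, smul_smul, mul_inv_cancel₀ hT.ne']
  have hγC : ∀ s ∈ Ioc 0 T, pot κ m (γ s) ≤ C := fun s hs => by
    refine hC _ ((segment_eq_image' ℝ x y).symm ▸ ⟨s / T, ⟨div_nonneg hs.1.le hT.le, ?_⟩, ?_⟩)
    · exact div_le_one_of_le₀ hs.2 hT.le
    · simp [γ, v, smul_smul, div_eq_mul_inv]
  calc phi κ m x y ≤ action κ m γ (fun _ => v) 0 T :=
        (iInf₂_le T hT).trans (iInf_le_of_le γ (iInf₂_le (fun _ => v) hγ))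
    _ ≤ ∫⁻ _ in Ioc 0 T, (ENNReal.ofReal (kineticEnergy m v) + C) :=
        setLIntegral_mono' measurableSet_Ioc fun s hs => add_le_add le_rfl (hγC s hs)
    _ = ENNReal.ofReal T * (ENNReal.ofReal (kineticEnergy m v) + C) := by
        rw [setLIntegral_const, Real.volume_Ioc, sub_zero, mul_comm]

theorem Dominated.sub_le_of_segment [CompleteSpace E] {u : (Fin N → E) → ℝ}
    (hu : Dominated κ m u) (hm : ∀ i, 0 ≤ m i) {x y : Fin N → E} {T : ℝ} (hT : 0 < T)
    {C : ℝ≥0} (hC : ∀ z ∈ segment ℝ x y, pot κ m z ≤ C) :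
    u x - u y ≤ T * (kineticEnergy m (T⁻¹ • (y - x)) + C) := by
  have h := (hu x y).trans (phi_le_of_segment hT hC)
  rw [← ENNReal.ofReal_coe_nnreal, ← ENNReal.ofReal_add (kineticEnergy_nonneg hm _) C.coe_nonneg,
    ← ENNReal.ofReal_mul hT.le] at h
  have hK := kineticEnergy_nonneg hm (T⁻¹ • (y - x))
  exact (ENNReal.ofReal_le_ofReal_iff (by positivity)).1 h

theorem Dominated.locallyLipschitzOn [CompleteSpace E] {u : (Fin N → E) → ℝ}
    (hu : Dominated κ m u) (hm : ∀ i, 0 ≤ m i) :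
    LocallyLipschitzOn {x | pot κ m x ≠ ⊤} u := by
  intro x₀ hx₀
  set c : ℝ≥0 := (pot κ m x₀).toNNReal + 1
  have hc : pot κ m x₀ < c := by
    rw [← ENNReal.coe_toNNReal hx₀]
    exact_mod_cast lt_add_one _
  obtain ⟨r, hr, hball⟩ := Metric.eventually_nhds_iff_ball.1
    ((continuous_pot.tendsto x₀).eventually_lt_const hc)
  refine ⟨_, Metric.ball x₀ r, mem_nhdsWithin_of_mem_nhds (Metric.ball_mem_nhds x₀ hr),
    LipschitzOnWith.of_le_add_mul' ((∑ i, m i) / 2 + c) fun x hx y hy => ?_⟩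
  rcases eq_or_ne x y with rfl | hxy
  · simp
  have hT : 0 < dist x y := dist_pos.2 hxy
  have hdiff := hu.sub_le_of_segment hm hT fun z hz =>
    (hball z ((convex_ball x₀ r).segment_subset hx hy hz)).le
  have hunit : ‖(dist x y)⁻¹ • (y - x)‖ = 1 := by
    rw [norm_smul, norm_inv, Real.norm_of_nonneg hT.le, dist_eq_norm', inv_mul_cancel₀]
    exact norm_ne_zero_iff.2 (sub_ne_zero.2 hxy.symm)
  have hkin := kineticEnergy_le hm ((dist x y)⁻¹ • (y - x))
  rw [hunit, one_pow, mul_one] at hkin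
  linarith [mul_le_mul_of_nonneg_left hkin hT.le]

theorem Dominated.ofReal_neg_fderiv_sub_le_pot [CompleteSpace E] {u ψ : (Fin N → E) → ℝ}
    (hu : Dominated κ m u) (hm : ∀ i, 0 ≤ m i) {x₀ : Fin N → E}
    (hψ : DifferentiableAt ℝ ψ x₀) (hmax : IsMaxOn (fun x => u x - ψ x) univ x₀)
    (v : Fin N → E) :
    ENNReal.ofReal (-fderiv ℝ ψ x₀ v - kineticEnergy m v) ≤ pot κ m x₀ := by
  refine le_of_forall_gt_imp_ge_of_dense fun C hC => ?_
  rcases eq_or_ne C ⊤ with rfl | hC_top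
  · exact le_top
  lift C to ℝ≥0 using hC_top
  obtain ⟨δ, hδ, hball⟩ := Metric.eventually_nhds_iff_ball.1
    ((continuous_pot.tendsto x₀).eventually_lt_const hC)
  have hray : Continuous fun T : ℝ => x₀ + T • v := by fun_prop
  have hnear : ∀ᶠ T in 𝓝[>] (0 : ℝ), x₀ + T • v ∈ Metric.ball x₀ δ :=
    nhdsWithin_le_nhds (hray.tendsto' 0 x₀ (by simp) |>.eventually (Metric.ball_mem_nhds x₀ hδ))
  have hsub : ∀ᶠ T in 𝓝[>] (0 : ℝ),
      ψ (x₀ + (0 : ℝ) • v) - ψ (x₀ + T • v) ≤ T * (kineticEnergy m v + C) := by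
    filter_upwards [hnear, self_mem_nhdsWithin] with T hT (hTpos : 0 < T)
    have hu_sub := hu.sub_le_of_segment hm hTpos fun z hz =>
      (hball z ((convex_ball x₀ δ).segment_subset (Metric.mem_ball_self hδ) hT hz)).le
    rw [add_sub_cancel_left, inv_smul_smul₀ hTpos.ne'] at hu_sub
    have hψ_sub := isMaxOn_iff.1 hmax (x₀ + T • v) (mem_univ _)
    rw [zero_smul, add_zero]
    linarith
  have hderiv : HasDerivAt (fun T : ℝ => ψ (x₀ + T • v)) (fderiv ℝ ψ x₀ v) 0 := by
    refine hψ.hasFDerivAt.comp_hasDerivAt_of_eq (f := fun T : ℝ => x₀ + T • v) 0 ?_ (by simp)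
    simpa using ((hasDerivAt_id (0 : ℝ)).smul_const v).const_add x₀
  have hle := hderiv.neg_le_of_eventually_sub_le hsub
  exact (ENNReal.ofReal_le_ofReal (by linarith)).trans_eq ENNReal.ofReal_coe_nnreal

theorem exists_apply_eq_neg_dualNormSq [FiniteDimensional ℝ E] (m : Fin N → ℝ)
    (p : (Fin N → E) →L[ℝ] ℝ) :
    ∃ v : Fin N → E, p v = -dualNormSq m p ∧ kineticEnergy m v = dualNormSq m p / 2 := by
  set pᵢ : Fin N → E →L[ℝ] ℝ :=
    fun i => p.comp (LinearMap.single ℝ (fun _ : Fin N => E) i).toContinuousLinearMap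
  set w := fun i => (InnerProductSpace.toDual ℝ E).symm (pᵢ i)
  have hw_norm : ∀ i, ‖w i‖ = ‖pᵢ i‖ := fun i => LinearIsometryEquiv.norm_map _ _
  have hw_apply : ∀ i, pᵢ i (w i) = ‖pᵢ i‖ ^ 2 := fun i => by
    rw [← InnerProductSpace.toDual_symm_apply, real_inner_self_eq_norm_sq, hw_norm]
  have hdual : dualNormSq m p = ∑ i, (m i)⁻¹ * ‖pᵢ i‖ ^ 2 := rfl
  refine ⟨fun i => -((m i)⁻¹ • w i), ?_, ?_⟩
  · rw [← Finset.univ_sum_single fun i => -((m i)⁻¹ • w i), map_sum, hdual,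
      ← Finset.sum_neg_distrib]
    refine Finset.sum_congr rfl fun i _ => ?_
    change pᵢ i _ = _
    rw [map_neg, map_smul, hw_apply, smul_eq_mul]
  · simp only [kineticEnergy, hdual, norm_neg, norm_smul, hw_norm, Real.norm_eq_abs,
      mul_pow, sq_abs, Finset.mul_sum, Finset.sum_div]
    refine Finset.sum_congr rfl fun i _ => ?_
    rcases eq_or_ne (m i) 0 with hmi | hmi
    · simp [hmi]
    · field_simp

end NBody

theorem dominated_viscosity_subsolution_general
    {E : Type*} [NormedAddCommGroup E] [InnerProductSpace ℝ E] [FiniteDimensional ℝ E]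
    [Nontrivial E] [MeasurableSpace E] [BorelSpace E]
    (κ : ℝ) (N : ℕ)
    (m : Fin N → ℝ) (hm : ∀ i, 0 < m i)
    (u : (Fin N → E) → ℝ) (hu : Dominated κ m u) :
    (∀ μ : Measure (Fin N → E), μ.IsAddHaarMeasure →
      ∀ᵐ x ∂μ, DifferentiableAt ℝ u x) ∧
    (∀ ψ : (Fin N → E) → ℝ, ContDiff ℝ 1 ψ → ∀ x₀ : Fin N → E,
      IsMaxOn (fun x => u x - ψ x) univ x₀ →
      ENNReal.ofReal (dualNormSq m (fderiv ℝ ψ x₀)) ≤ 2 * pot κ m x₀) := by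
  have hm₀ : ∀ i, 0 ≤ m i := fun i => (hm i).le
  refine ⟨fun μ _ => ?_, fun ψ hψ x₀ hmax => ?_⟩
  · have hopen : IsOpen {x : Fin N → E | pot κ m x ≠ ⊤} :=
      isOpen_compl_singleton.preimage continuous_pot
    filter_upwards [ae_injective μ, (hu.locallyLipschitzOn hm₀).ae_differentiableAt μ hopen]
      with x hx_inj hx_diff
    exact hx_diff (pot_ne_top_of_injective hx_inj)
  · obtain ⟨v, hpv, hkin⟩ := exists_apply_eq_neg_dualNormSq m (fderiv ℝ ψ x₀)
    have hv := hu.ofReal_neg_fderiv_sub_le_pot hm₀ (hψ.differentiable one_ne_zero x₀) hmax v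
    rw [hpv, hkin, neg_neg, sub_half] at hv
    calc ENNReal.ofReal (dualNormSq m (fderiv ℝ ψ x₀))
        = 2 * ENNReal.ofReal (dualNormSq m (fderiv ℝ ψ x₀) / 2) := by
          rw [← ENNReal.ofReal_ofNat 2, ← ENNReal.ofReal_mul zero_le_two,
            mul_div_cancel₀ _ two_ne_zero]
      _ ≤ 2 * pot κ m x₀ := by gcongr

/-- Dominated functions are differentiable almost everywhere (w.r.t. any Haar measure on
`E^N`) and are viscosity subsolutions of the critical Hamilton–Jacobi equation
`|dₓu|² = 2 U_κ(x)` on all of `E^N`. -/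
theorem dominated_viscosity_subsolution
    {E : Type*} [NormedAddCommGroup E] [InnerProductSpace ℝ E] [FiniteDimensional ℝ E]
    [Nontrivial E] [MeasurableSpace E] [BorelSpace E]
    (κ : ℝ) (hκ : κ ∈ Ioo (0:ℝ) 1) (N : ℕ) (hN : 2 ≤ N)
    (m : Fin N → ℝ) (hm : ∀ i, 0 < m i)
    (u : (Fin N → E) → ℝ) (hu : Dominated κ m u) :
    (∀ μ : Measure (Fin N → E), μ.IsAddHaarMeasure →
      ∀ᵐ x ∂μ, DifferentiableAt ℝ u x) ∧
    (∀ ψ : (Fin N → E) → ℝ, ContDiff ℝ 1 ψ → ∀ x₀ : Fin N → E,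
      IsMaxOn (fun x => u x - ψ x) univ x₀ →
      ENNReal.ofReal (dualNormSq m (fderiv ℝ ψ x₀)) ≤ 2 * pot κ m x₀) :=
  dominated_viscosity_subsolution_general κ N m hm u hu
end
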